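/- arXiv:2009.03724 — 5 statements merged into one kernel-verified Lean document; each statement's English description precedes it below -/
import Mathlib

section
/- Let X be a topological space such that every continuous map X → ℝ/ℤ lifts to a continuous map X → ℝ through the quotient map q : ℝ → ℝ/ℤ (i.e. for every continuous λ : X → ℝ/ℤ there is a continuous F : X → ℝ with q ∘ F = λ). Then every group homomorphism ψ : C(X, ℝ/ℤ) → ℤ is trivial. -/
/-!
A continuous map `f = q ∘ F` into the circle is `n • (q ∘ F / n)` for every `n ≠ 0`, so under the
lifting hypothesis `C(X, ℝ/ℤ)` is a divisible group. The image of a divisible group in `ℤ` is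
divisible, and the only integer divisible by every positive integer is `0`.
-/

theorem Int.eq_zero_of_forall_natCast_dvd {m : ℤ} (h : ∀ n : ℕ, n ≠ 0 → (n : ℤ) ∣ m) : m = 0 :=
  Int.eq_zero_of_dvd_of_natAbs_lt_natAbs (h (m.natAbs + 1) m.natAbs.succ_ne_zero)
    (by rw [Int.natAbs_natCast]; omega)

theorem AddMonoidHom.eq_zero_of_surjective_nsmul {A : Type*} [AddMonoid A]
    (hdiv : ∀ n : ℕ, n ≠ 0 → Function.Surjective fun a : A => n • a) (φ : A →+ ℤ) : φ = 0 := by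
  ext a
  refine Int.eq_zero_of_forall_natCast_dvd fun n hn => ?_
  obtain ⟨b, rfl⟩ := hdiv n hn a
  exact ⟨φ b, by rw [map_nsmul, nsmul_eq_mul]⟩

theorem ContinuousMap.surjective_nsmul_of_lift_addCircle {X : Type*} [TopologicalSpace X] {p : ℝ}
    (hlift : ∀ f : C(X, AddCircle p), ∃ F : C(X, ℝ), ∀ x, ((F x : ℝ) : AddCircle p) = f x)
    {n : ℕ} (hn : n ≠ 0) : Function.Surjective fun g : C(X, AddCircle p) => n • g := by
  intro f
  obtain ⟨F, hF⟩ := hlift f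
  refine ⟨⟨fun x => ((F x / n : ℝ) : AddCircle p),
    (AddCircle.continuous_mk' p).comp (F.continuous.div_const _)⟩, ?_⟩
  ext x
  have hn' : (n : ℝ) ≠ 0 := Nat.cast_ne_zero.mpr hn
  change n • ((F x / n : ℝ) : AddCircle p) = f x
  rw [← AddCircle.coe_nsmul, nsmul_eq_mul, mul_div_cancel₀ _ hn', hF]

/-- If every continuous map `X → ℝ/ℤ` lifts continuously through the quotient map
`q : ℝ → ℝ/ℤ`, then every group homomorphism `C(X, ℝ/ℤ) → ℤ` is trivial. -/
theorem every_hom_CXCircle_to_int_trivial (X : Type*) [TopologicalSpace X]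
    (hlift : ∀ lam : C(X, AddCircle (1 : ℝ)), ∃ F : C(X, ℝ),
      ∀ x : X, ((F x : ℝ) : AddCircle (1 : ℝ)) = lam x)
    (ψ : C(X, AddCircle (1 : ℝ)) →+ ℤ) : ψ = 0 :=
  ψ.eq_zero_of_surjective_nsmul fun _ hn => ContinuousMap.surjective_nsmul_of_lift_addCircle hlift hn
end

section
/- Let X be a topological space, G a group acting on X by homeomorphisms, and 𝔎 : G → C(X,ℝ/ℤ) a map such that for all g, h ∈ G the function x ↦ 𝔎(gh)(x) − 𝔎(g)(h·x) − 𝔎(h)(x) is constant on X. Fix x ∈ X and define 𝔊_x : G × G → ℝ/ℤ by 𝔊_x(g,h) = 𝔎(g)(h·x) − 𝔎(g)(x). Then 𝔊_x is a group 2-cocycle on G with values in ℝ/ℤ (with trivial G-action): for all g, h, k ∈ G, 𝔊_x(h,k) − 𝔊_x(gh,k) + 𝔊_x(g,hk) − 𝔊_x(g,h) = 0. -/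
/-- Let `G` act on `X` by homeomorphisms and `𝔎 : G → C(X, ℝ/ℤ)` be such that for all
`g, h ∈ G` the function `x ↦ 𝔎(gh)(x) − 𝔎(g)(h·x) − 𝔎(h)(x)` is constant. Then, for a
fixed `x`, `𝔊_x(g,h) = 𝔎(g)(h·x) − 𝔎(g)(x)` is a group 2-cocycle on `G` with values
in `ℝ/ℤ` (trivial action). -/
theorem gal_kedra_cocycle_is_cocycle (X : Type*) [TopologicalSpace X]
    (G : Type*) [Group G] [MulAction G X] [ContinuousConstSMul G X]
    (𝔎 : G → C(X, AddCircle (1 : ℝ)))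
    (hconst : ∀ g h : G, ∃ c : AddCircle (1 : ℝ),
      ∀ x : X, 𝔎 (g * h) x - 𝔎 g (h • x) - 𝔎 h x = c)
    (x : X) :
    ∀ g h k : G,
      (𝔎 h (k • x) - 𝔎 h x) - (𝔎 (g * h) (k • x) - 𝔎 (g * h) x)
        + (𝔎 g ((h * k) • x) - 𝔎 g x) - (𝔎 g (h • x) - 𝔎 g x) = 0 := by
  intro g h k
  obtain ⟨c, hc⟩ := hconst g h
  have key : 𝔎 (g * h) (k • x) - 𝔎 g (h • (k • x)) - 𝔎 h (k • x)
      = 𝔎 (g * h) x - 𝔎 g (h • x) - 𝔎 h x := (hc (k • x)).trans (hc x).symm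
  rw [mul_smul]
  have h2 := neg_eq_zero.mpr (sub_eq_zero.mpr key)
  abel_nf at h2 ⊢
  exact h2
end

section
/- Let X be a topological space, G a group acting on X by homeomorphisms, and 𝔎 : G → C(X,ℝ/ℤ) a map such that for all g, h ∈ G the function x ↦ 𝔎(gh)(x) − 𝔎(g)(h·x) − 𝔎(h)(x) is constant on X. For z ∈ X define 𝔊_z(g,h) = 𝔎(g)(h·z) − 𝔎(g)(z). Then for any two points x, y ∈ X, the 2-cocycles 𝔊_x and 𝔊_y are cohomologous: with β : G → ℝ/ℤ defined by β(g) = 𝔎(g)(y) − 𝔎(g)(x), one has 𝔊_x(g,h) − 𝔊_y(g,h) = β(h) − β(gh) + β(g) for all g, h ∈ G. -/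
/-- With `G` acting on `X` by homeomorphisms and `𝔎 : G → C(X, ℝ/ℤ)` such that
`x ↦ 𝔎(gh)(x) − 𝔎(g)(h·x) − 𝔎(h)(x)` is constant for all `g, h`, the 2-cocycles
`𝔊_x` and `𝔊_y` (for base points `x, y ∈ X`) are cohomologous: with
`β(g) = 𝔎(g)(y) − 𝔎(g)(x)` one has `𝔊_x(g,h) − 𝔊_y(g,h) = β(h) − β(gh) + β(g)`. -/
theorem gal_kedra_cocycle_basepoint_independence (X : Type*) [TopologicalSpace X]
    (G : Type*) [Group G] [MulAction G X] [ContinuousConstSMul G X]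
    (𝔎 : G → C(X, AddCircle (1 : ℝ)))
    (hconst : ∀ g h : G, ∃ c : AddCircle (1 : ℝ),
      ∀ z : X, 𝔎 (g * h) z - 𝔎 g (h • z) - 𝔎 h z = c)
    (x y : X) :
    ∀ g h : G,
      (𝔎 g (h • x) - 𝔎 g x) - (𝔎 g (h • y) - 𝔎 g y) =
        (𝔎 h y - 𝔎 h x) - (𝔎 (g * h) y - 𝔎 (g * h) x) + (𝔎 g y - 𝔎 g x) := by
  intro g h
  obtain ⟨c, hc⟩ := hconst g h
  have k := (hc x).trans (hc y).symm
  rw [← sub_eq_zero] at k ⊢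
  rw [← neg_eq_zero, ← k]; abel
end

section
/- Let X be a topological space, G a group acting on X by homeomorphisms, and let 𝔎, 𝔎' : G → C(X,ℝ/ℤ) be two maps each satisfying: for all g, h ∈ G the function x ↦ 𝔎(gh)(x) − 𝔎(g)(h·x) − 𝔎(h)(x) is constant on X (and likewise for 𝔎'). Suppose there is β ∈ C(X,ℝ/ℤ) such that for each g ∈ G the function x ↦ 𝔎'(g)(x) − 𝔎(g)(x) − (β(g·x) − β(x)) is constant on X. Fix x ∈ X and define 𝔊_x(g,h) = 𝔎(g)(h·x) − 𝔎(g)(x) and 𝔊'_x(g,h) = 𝔎'(g)(h·x) − 𝔎'(g)(x). Then 𝔊'_x and 𝔊_x are cohomologous: with γ : G → ℝ/ℤ given by γ(g) = β(x) − β(g·x), one has 𝔊'_x(g,h) − 𝔊_x(g,h) = γ(h) − γ(gh) + γ(g) for all g, h ∈ G. -/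
/-- With `G` acting on `X` by homeomorphisms, let `𝔎, 𝔎' : G → C(X, ℝ/ℤ)` each
satisfy the constancy condition `x ↦ 𝔎(gh)(x) − 𝔎(g)(h·x) − 𝔎(h)(x)` constant, and
suppose `β ∈ C(X, ℝ/ℤ)` is such that `x ↦ 𝔎'(g)(x) − 𝔎(g)(x) − (β(g·x) − β(x))` is
constant for each `g`. Then, for fixed `x`, the cocycles
`𝔊'_x(g,h) = 𝔎'(g)(h·x) − 𝔎'(g)(x)` and `𝔊_x(g,h) = 𝔎(g)(h·x) − 𝔎(g)(x)` are
cohomologous: with `γ(g) = β(x) − β(g·x)` one has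
`𝔊'_x(g,h) − 𝔊_x(g,h) = γ(h) − γ(gh) + γ(g)`. -/
theorem gal_kedra_cocycle_cochain_independence (X : Type*) [TopologicalSpace X]
    (G : Type*) [Group G] [MulAction G X] [ContinuousConstSMul G X]
    (𝔎 𝔎' : G → C(X, AddCircle (1 : ℝ)))
    (hconst : ∀ g h : G, ∃ c : AddCircle (1 : ℝ),
      ∀ z : X, 𝔎 (g * h) z - 𝔎 g (h • z) - 𝔎 h z = c)
    (hconst' : ∀ g h : G, ∃ c : AddCircle (1 : ℝ),
      ∀ z : X, 𝔎' (g * h) z - 𝔎' g (h • z) - 𝔎' h z = c)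
    (β : C(X, AddCircle (1 : ℝ)))
    (hβ : ∀ g : G, ∃ c : AddCircle (1 : ℝ),
      ∀ z : X, 𝔎' g z - 𝔎 g z - (β (g • z) - β z) = c)
    (x : X) :
    ∀ g h : G,
      (𝔎' g (h • x) - 𝔎' g x) - (𝔎 g (h • x) - 𝔎 g x) =
        (β x - β (h • x)) - (β x - β ((g * h) • x)) + (β x - β (g • x)) := by
  intro g h
  obtain ⟨c, hc⟩ := hβ g
  have h1 := hc (h • x)
  have h2 := hc x
  rw [← mul_smul] at h1
  have := h1.trans h2.symm
  have key : (𝔎' g (h • x) - 𝔎' g x) - (𝔎 g (h • x) - 𝔎 g x) -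
      ((β x - β (h • x)) - (β x - β ((g * h) • x)) + (β x - β (g • x))) =
      (𝔎' g (h • x) - 𝔎 g (h • x) - (β ((g * h) • x) - β (h • x))) -
      (𝔎' g x - 𝔎 g x - (β (g • x) - β x)) := by abel
  rw [this, sub_self] at key
  exact sub_eq_zero.mp key
end

section
/- Let π : Γ → G be a group homomorphism, let Γ act on a set E and G act on a set X, and let p : E → X satisfy p(φ·e) = π(φ)·p(e) for all φ ∈ Γ, e ∈ E. Let θ : E → ℝ/ℤ and 𝔎 : G → (X → ℝ/ℤ) satisfy: for every φ ∈ Γ and every e ∈ E, 𝔎(π(φ))(p(e)) = θ(φ·e) − θ(e). Fix y ∈ E with x = p(y), and define τ : Γ → ℝ/ℤ by τ(φ) = θ(φ·y) − θ(y), and 𝔊_x : G × G → ℝ/ℤ by 𝔊_x(g,h) = 𝔎(g)(h·x) − 𝔎(g)(x). Then for all φ, ψ ∈ Γ: τ(ψ) − τ(φψ) + τ(φ) = −𝔊_x(π(φ), π(ψ)); that is, −δτ = π*𝔊_x as 2-cochains on Γ with values in ℝ/ℤ. -/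
/-- Let `π : Γ → G` be a group homomorphism, `Γ` act on a set `E`, `G` act on a set
`X`, and `p : E → X` be equivariant (`p(φ·e) = π(φ)·p(e)`). Let `θ : E → ℝ/ℤ` and
`𝔎 : G → (X → ℝ/ℤ)` satisfy `𝔎(π φ)(p e) = θ(φ·e) − θ(e)` for all `φ, e`. Fix
`y ∈ E` with `x = p y`, and set `τ(φ) = θ(φ·y) − θ(y)` and
`𝔊_x(g,h) = 𝔎(g)(h·x) − 𝔎(g)(x)`. Then `τ(ψ) − τ(φψ) + τ(φ) = −𝔊_x(π φ, π ψ)` for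
all `φ, ψ ∈ Γ`; that is, `−δτ = π*𝔊_x`. -/
theorem coboundary_of_pullback_cocycle
    {Γ G E X : Type*} [Group Γ] [Group G] [MulAction Γ E] [MulAction G X]
    (π : Γ →* G) (p : E → X)
    (hp : ∀ (φ : Γ) (e : E), p (φ • e) = π φ • p e)
    (θ : E → AddCircle (1 : ℝ)) (𝔎 : G → X → AddCircle (1 : ℝ))
    (h𝔎 : ∀ (φ : Γ) (e : E), 𝔎 (π φ) (p e) = θ (φ • e) - θ e)
    (y : E) :
    ∀ φ ψ : Γ,
      (θ (ψ • y) - θ y) - (θ ((φ * ψ) • y) - θ y) + (θ (φ • y) - θ y) =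
        -(𝔎 (π φ) (π ψ • p y) - 𝔎 (π φ) (p y)) := by
  intro φ ψ
  have h1 : 𝔎 (π φ) (π ψ • p y) = θ (φ • ψ • y) - θ (ψ • y) := by
    rw [← hp, h𝔎]
  rw [h1, h𝔎, ← mul_smul]
  abel
end
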